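/- arXiv:1409.6427 — 3 statements merged into one kernel-verified Lean document; each statement's English description precedes it below -/
import Mathlib

section
/- If a triangle ρ : r ∘ j ⟹ f exhibits r as a right extension of f along j in a bicategory M, and j is a fully faithful left adjoint (i.e. j has a right adjoint j* with invertible unit η : 1_A ≅ j* ∘ j), then ρ is invertible. -/
/-!
Transposing along `j ⊣ jₛ`, then using the extension property of `ρ`, then precomposing with the
invertible unit gives bijections `(h ⟶ j ≫ r) ≃ (jₛ ≫ h ⟶ r) ≃ (j ≫ jₛ ≫ h ⟶ f) ≃ (h ⟶ f)`
for every `h : A ⟶ X`. Their composite is postcomposition with `ρ`, so `ρ` is invertible by Yoneda.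
-/

open CategoryTheory Bicategory

universe w v u

/-- `ρ : j ≫ r ⟶ f` exhibits `r` as a right extension of `f` along `j`. -/
def IsRightExt {M : Type u} [Bicategory.{w, v} M] {A B X : M} (j : A ⟶ B) (f : A ⟶ X)
    (r : B ⟶ X) (ρ : j ≫ r ⟶ f) : Prop :=
  ∀ g : B ⟶ X, Function.Bijective (fun θ : g ⟶ r => j ◁ θ ≫ ρ)

namespace CategoryTheory.Bicategory.Adjunction

variable {M : Type u} [Bicategory.{w, v} M] {A B X : M} {j : A ⟶ B} {jₛ : B ⟶ A}

theorem comp_eq_unit_comp_whiskerLeft_homEquiv₁ (adj : j ⊣ jₛ) {h f : A ⟶ X} {r : B ⟶ X}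
    (x : h ⟶ j ≫ r) (ρ : j ≫ r ⟶ f) :
    x ≫ ρ = (λ_ h).inv ≫ adj.unit ▷ h ≫ (α_ j jₛ h).hom ≫ j ◁ adj.homEquiv₁ x ≫ ρ := by
  conv_lhs => rw [← adj.homEquiv₁.symm_apply_apply x]
  simp only [homEquiv₁_symm_apply, Category.assoc]

end CategoryTheory.Bicategory.Adjunction

/-- If `ρ : j ≫ r ⟶ f` exhibits `r` as a right extension of `f` along `j`, and `j` is a
fully faithful left adjoint (it has a right adjoint `j✶` with invertible unit
`𝟙 A ⟶ j ≫ j✶`), then `ρ` is invertible. -/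
theorem isIso_of_isRightExt_of_fullyFaithful {M : Type u} [Bicategory.{w, v} M]
    {A B X : M} {j : A ⟶ B} {f : A ⟶ X} {r : B ⟶ X} {ρ : j ≫ r ⟶ f}
    (hρ : IsRightExt j f r ρ)
    (jₛ : B ⟶ A) (adj : Bicategory.Adjunction j jₛ) (ff : IsIso adj.unit) :
    IsIso ρ := by
  refine isIso_of_yoneda_map_bijective ρ fun h => ?_
  let unitIso : h ≅ j ≫ jₛ ≫ h :=
    (λ_ h).symm ≪≫ whiskerRightIso (asIso adj.unit) h ≪≫ α_ j jₛ h
  have factor : (fun x : h ⟶ j ≫ r => x ≫ ρ) =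
      unitIso.symm.homFromEquiv ∘ (fun θ => j ◁ θ ≫ ρ) ∘ adj.homEquiv₁ :=
    funext fun x => (adj.comp_eq_unit_comp_whiskerLeft_homEquiv₁ x ρ).trans (by simp [unitIso])
  rw [factor]
  exact unitIso.symm.homFromEquiv.bijective.comp ((hρ _).comp adj.homEquiv₁.bijective)
end

section
/- Pasting a right extension triangle with an exact (Beck–Chevalley) square yields a right extension: suppose ρ : r ∘ j ⟹ f exhibits r as a (pointwise) right extension of f along j; suppose λ : j ∘ q ⟹ b ∘ p is a square of left adjoints whose mate λ̄ : p ∘ q* ⟹ b* ∘ j (using the adjunctions q ⊣ q* and b ⊣ b*) is invertible, and moreover r ≅ hom_A(j, f) as a right extension in the ambient bicategory. Then the pasting of λ and ρ exhibits r ∘ b as a right extension of f ∘ q along p. -/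
open CategoryTheory Bicategory

universe w v u

/-- The mate `λ̄ : p ∘ q✶ ⟶ b✶ ∘ j` (written diagrammatically `q✶ ≫ p ⟶ j ≫ b✶`) of a
square `lam : b ∘ p ⟶ j ∘ q` (diagrammatically `p ≫ b ⟶ q ≫ j`), formed using the
adjunctions `q ⊣ q✶` and `b ⊣ b✶`. -/
def mateOfSquare {M : Type u} [Bicategory.{w, v} M] {S A B U : M}
    {q : S ⟶ A} {p : S ⟶ U} {j : A ⟶ B} {b : U ⟶ B}
    (qs : A ⟶ S) (adjq : Bicategory.Adjunction q qs)
    (bs : B ⟶ U) (adjb : Bicategory.Adjunction b bs)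
    (lam : p ≫ b ⟶ q ≫ j) : qs ≫ p ⟶ j ≫ bs :=
  qs ◁ ((ρ_ p).inv ≫ p ◁ adjb.unit ≫ (α_ p b bs).inv ≫ lam ▷ bs ≫ (α_ q j bs).hom) ≫
    (α_ qs q (j ≫ bs)).inv ≫ adjq.counit ▷ (j ≫ bs) ≫ (λ_ (j ≫ bs)).hom

/-!
For `g : U ⟶ X`, the 2-cells `g ⟶ b ≫ r` correspond (via `b ⊣ bs`) to `bs ≫ g ⟶ r`, hence,
since `ρ` is a right extension, to `j ≫ bs ≫ g ⟶ f`; precomposing with the invertible mate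
whiskered by `g` identifies these with `qs ≫ p ≫ g ⟶ f`, which correspond (via `q ⊣ qs`) to
`p ≫ g ⟶ q ≫ f`. A zigzag computation shows that the composite bijection is precomposition
with the pasted 2-cell.
-/

namespace CategoryTheory.Bicategory

variable {M : Type u} [Bicategory.{w, v} M]

theorem Adjunction.whiskerLeft_comp_whiskerRight_eq_homEquiv₂_homEquiv₁ {S U B X : M}
    {p : S ⟶ U} {b : U ⟶ B} {bs : B ⟶ U} (adj : b ⊣ bs) {k : S ⟶ B} {g : U ⟶ X} {r : B ⟶ X}
    (lam : p ≫ b ⟶ k) (θ : g ⟶ b ≫ r) :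
    p ◁ θ ≫ (α_ p b r).inv ≫ lam ▷ r =
      adj.homEquiv₂ lam ▷ g ≫ (α_ k bs g).hom ≫ k ◁ adj.homEquiv₁ θ := by
  rw [Adjunction.homEquiv₂_apply, Adjunction.homEquiv₁_apply]
  calc p ◁ θ ≫ (α_ p b r).inv ≫ lam ▷ r
      _ = 𝟙 _ ⊗≫ p ◁ θ ⊗≫ p ◁ leftZigzag adj.unit adj.counit ▷ r ⊗≫ lam ▷ r := by
        rw [adj.left_triangle]; bicategory
      _ = 𝟙 _ ⊗≫ p ◁ (adj.unit ▷ g ≫ (b ≫ bs) ◁ θ) ⊗≫ p ◁ b ◁ adj.counit ▷ r ⊗≫ lam ▷ r := by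
        rw [← whisker_exchange]; bicategory
      _ = 𝟙 _ ⊗≫ p ◁ adj.unit ▷ g ⊗≫ (p ≫ b) ◁ bs ◁ θ ⊗≫
            (lam ▷ ((bs ≫ b) ≫ r) ≫ k ◁ (adj.counit ▷ r)) ⊗≫ 𝟙 _ := by
        rw [← whisker_exchange lam (adj.counit ▷ r)]; bicategory
      _ = 𝟙 _ ⊗≫ p ◁ adj.unit ▷ g ⊗≫ (lam ▷ (bs ≫ g) ≫ k ◁ bs ◁ θ) ⊗≫
            k ◁ (adj.counit ▷ r) ⊗≫ 𝟙 _ := by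
        rw [← whisker_exchange lam (bs ◁ θ)]; bicategory
      _ = _ := by
        bicategory

theorem homEquiv₁_whiskerLeft_comp_pasting {S A B U X : M} {q : S ⟶ A} {p : S ⟶ U}
    {j : A ⟶ B} {b : U ⟶ B} {f : A ⟶ X} {r : B ⟶ X} {qs : A ⟶ S} {bs : B ⟶ U}
    (adjq : q ⊣ qs) (adjb : b ⊣ bs) (lam : p ≫ b ⟶ q ≫ j) (ρ : j ≫ r ⟶ f) {g : U ⟶ X}
    (θ : g ⟶ b ≫ r) :
    adjq.homEquiv₁ (p ◁ θ ≫ (α_ p b r).inv ≫ lam ▷ r ≫ (α_ q j r).hom ≫ q ◁ ρ) =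
      (α_ qs p g).inv ≫ mateEquiv adjq adjb lam ▷ g ≫ (α_ j bs g).hom ≫
        j ◁ adjb.homEquiv₁ θ ≫ ρ := by
  have hθ := adjb.whiskerLeft_comp_whiskerRight_eq_homEquiv₂_homEquiv₁ lam θ
  set φ := adjb.homEquiv₁ θ
  calc adjq.homEquiv₁ (p ◁ θ ≫ (α_ p b r).inv ≫ lam ▷ r ≫ (α_ q j r).hom ≫ q ◁ ρ)
      _ = adjq.homEquiv₁ (adjb.homEquiv₂ lam ▷ g ⊗≫ q ◁ (j ◁ φ ≫ ρ)) := by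
        rw [reassoc_of% hθ]; congr 1; bicategory
      _ = 𝟙 _ ⊗≫ qs ◁ adjb.homEquiv₂ lam ▷ g ⊗≫
            ((qs ≫ q) ◁ (j ◁ φ ≫ ρ) ≫ adjq.counit ▷ f) ⊗≫ 𝟙 _ := by
        rw [Adjunction.homEquiv₁_apply]; bicategory
      _ = 𝟙 _ ⊗≫ qs ◁ adjb.homEquiv₂ lam ▷ g ⊗≫ adjq.counit ▷ (j ≫ bs ≫ g) ⊗≫ j ◁ φ ≫ ρ := by
        rw [whisker_exchange]; bicategory
      _ = _ := by
        rw [mateEquiv_apply, Adjunction.homEquiv₁_apply]; bicategory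

theorem mateOfSquare_eq_mateEquiv {S A B U : M} {q : S ⟶ A} {p : S ⟶ U} {j : A ⟶ B}
    {b : U ⟶ B} (qs : A ⟶ S) (adjq : q ⊣ qs) (bs : B ⟶ U) (adjb : b ⊣ bs)
    (lam : p ≫ b ⟶ q ≫ j) :
    mateOfSquare qs adjq bs adjb lam = mateEquiv adjq adjb lam := by
  simp only [mateOfSquare, mateEquiv_apply, Adjunction.homEquiv₁_apply,
    Adjunction.homEquiv₂_apply, Category.assoc]

end CategoryTheory.Bicategory

/-- Pasting a (pointwise) right extension with an exact (Beck–Chevalley) square: if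
`ρ : j ≫ r ⟶ f` exhibits `r` as a right extension of `f` along `j` in the ambient
bicategory (`r ≅ hom (j, f)`, the pointwise condition), and the square
`lam : b ∘ p ⟶ j ∘ q` of left adjoints has invertible mate `λ̄ : p ∘ q✶ ⟶ b✶ ∘ j`,
then the pasting of `lam` and `ρ` exhibits `b ≫ r` (that is, `r ∘ b`) as a right
extension of `q ≫ f` (that is, `f ∘ q`) along `p`. -/
theorem isRightExt_paste_of_BC {M : Type u} [Bicategory.{w, v} M] {S A B U X : M}
    {q : S ⟶ A} {p : S ⟶ U} {j : A ⟶ B} {b : U ⟶ B} {f : A ⟶ X} {r : B ⟶ X}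
    (qs : A ⟶ S) (adjq : Bicategory.Adjunction q qs)
    (bs : B ⟶ U) (adjb : Bicategory.Adjunction b bs)
    (lam : p ≫ b ⟶ q ≫ j)
    (exact : IsIso (mateOfSquare qs adjq bs adjb lam))
    (ρ : j ≫ r ⟶ f) (hρ : IsRightExt j f r ρ) :
    IsRightExt p (q ≫ f) (b ≫ r)
      ((α_ p b r).inv ≫ lam ▷ r ≫ (α_ q j r).hom ≫ q ◁ ρ) := by
  rw [mateOfSquare_eq_mateEquiv] at exact
  intro g
  let e : qs ≫ p ≫ g ≅ j ≫ bs ≫ g :=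
    (α_ qs p g).symm ≪≫ whiskerRightIso (asIso (mateEquiv adjq adjb lam)) g ≪≫ α_ j bs g
  have hfactor : adjq.homEquiv₁ ∘ (fun θ : g ⟶ b ≫ r =>
        p ◁ θ ≫ (α_ p b r).inv ≫ lam ▷ r ≫ (α_ q j r).hom ≫ q ◁ ρ) =
      e.symm.homFromEquiv ∘ (fun φ : bs ≫ g ⟶ r => j ◁ φ ≫ ρ) ∘ adjb.homEquiv₁ := by
    funext θ
    simpa [e] using homEquiv₁_whiskerLeft_comp_pasting adjq adjb lam ρ θ
  rw [← adjq.homEquiv₁.comp_bijective, hfactor]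
  exact e.symm.homFromEquiv.bijective.comp ((hρ _).comp adjb.homEquiv₁.bijective)
end

section
/- In the comma square for ordinary categories, the Beck–Chevalley condition holds: given functors J : A ⟶ Bc and B : U ⟶ Bc, form the comma category B/J with projections D₁ : B/J ⟶ A and D₀ : B/J ⟶ U and canonical natural transformation λ : B ∘ D₀ ⟹ J ∘ D₁. Then in the bicategory of profunctors, the mate D₀* ∘ D₁^* ⟹ B^* ∘ J* of λ is invertible; concretely, the canonical map ∫^{(V, β : BV → JX, X)} A(X,A) × U(U,V) ⟶ Bc(BU, JA) sending (α, υ) at (V, β, X) to Jα ∘ β ∘ Bυ is a bijection for all objects U of U and A of A. -/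
open CategoryTheory

universe v₁ v₂ v₃ u₁ u₂ u₃

variable {𝒰 : Type u₁} [Category.{v₁} 𝒰] {𝒜 : Type u₂} [Category.{v₂} 𝒜]
  {ℬ : Type u₃} [Category.{v₃} ℬ]

/-- The relation generating the coend `∫^{(V, β : BV → JX, X)} 𝒜(X, A₀) × 𝒰(U₀, V)`
indexed by the comma category `B/J`. -/
def CoendRel (J : 𝒜 ⥤ ℬ) (B : 𝒰 ⥤ ℬ) (U₀ : 𝒰) (A₀ : 𝒜)
    (x y : Σ c : Comma B J, (c.right ⟶ A₀) × (U₀ ⟶ c.left)) : Prop :=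
  ∃ (c c' : Comma B J) (m : c ⟶ c') (α : c'.right ⟶ A₀) (υ : U₀ ⟶ c.left),
    x = ⟨c, (m.right ≫ α, υ)⟩ ∧ y = ⟨c', (α, υ ≫ m.left)⟩

/-- The coend `∫^{(V, β : BV → JX, X)} 𝒜(X, A₀) × 𝒰(U₀, V)`, i.e. the value
`(D₀* ∘ D₁^*)(U₀, A₀)` of the composite profunctor of the comma projections. -/
def CommaCoend (J : 𝒜 ⥤ ℬ) (B : 𝒰 ⥤ ℬ) (U₀ : 𝒰) (A₀ : 𝒜) : Type _ :=
  Quot (CoendRel J B U₀ A₀)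

/-- The canonical map `∫^{(V,β,X)} 𝒜(X,A₀) × 𝒰(U₀,V) ⟶ ℬ(B U₀, J A₀)`, which at the
component `(V, β : BV → JX, X)` sends `(α, υ)` to `Jα ∘ β ∘ Bυ`; it is the mate of the
canonical 2-cell of the comma square. -/
def commaCoendToHom (J : 𝒜 ⥤ ℬ) (B : 𝒰 ⥤ ℬ) (U₀ : 𝒰) (A₀ : 𝒜) :
    CommaCoend J B U₀ A₀ → (B.obj U₀ ⟶ J.obj A₀) :=
  Quot.lift (fun x => B.map x.2.2 ≫ x.1.hom ≫ J.map x.2.1) (by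
    rintro _ _ ⟨c, c', m, α, υ, rfl, rfl⟩
    dsimp
    rw [Functor.map_comp, Functor.map_comp, Category.assoc,
      ← reassoc_of% (CommaMorphism.w m)])

/-! A representative `(α, υ)` at `(V, β, X)` is identified with `(𝟙, 𝟙)` at
`(U₀, Jα ∘ β ∘ Bυ, A₀)` along the zigzag `(V, β, X) ⟶ (V, Jα ∘ β, A₀) ⟵ (U₀, Jα ∘ β ∘ Bυ, A₀)`
in `B/J`. Hence `f ↦ [(𝟙, 𝟙) at (U₀, f, A₀)]` is inverse to the canonical map. -/

section

variable (J : 𝒜 ⥤ ℬ) (B : 𝒰 ⥤ ℬ) (U₀ : 𝒰) (A₀ : 𝒜)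

def homToCommaCoend (f : B.obj U₀ ⟶ J.obj A₀) : CommaCoend J B U₀ A₀ :=
  Quot.mk _ ⟨⟨U₀, A₀, f⟩, (𝟙 A₀, 𝟙 U₀)⟩

@[simp]
theorem commaCoendToHom_homToCommaCoend (f : B.obj U₀ ⟶ J.obj A₀) :
    commaCoendToHom J B U₀ A₀ (homToCommaCoend J B U₀ A₀ f) = f := by
  simp [commaCoendToHom, homToCommaCoend]

theorem commaCoend_mk_comp_right {c c' : Comma B J} (m : c ⟶ c') (α : c'.right ⟶ A₀)
    (υ : U₀ ⟶ c.left) :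
    (Quot.mk _ ⟨c, (m.right ≫ α, υ)⟩ : CommaCoend J B U₀ A₀) = Quot.mk _ ⟨c', (α, υ ≫ m.left)⟩ :=
  Quot.sound ⟨c, c', m, α, υ, rfl, rfl⟩

theorem commaCoend_mk_eq_mk_id_right (c : Comma B J) (α : c.right ⟶ A₀) (υ : U₀ ⟶ c.left) :
    (Quot.mk _ ⟨c, (α, υ)⟩ : CommaCoend J B U₀ A₀) =
      Quot.mk _ ⟨⟨c.left, A₀, c.hom ≫ J.map α⟩, (𝟙 A₀, υ)⟩ := by
  simpa using commaCoend_mk_comp_right J B U₀ A₀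
    (c' := ⟨c.left, A₀, c.hom ≫ J.map α⟩) ⟨𝟙 c.left, α, by simp⟩ (𝟙 A₀) υ

theorem commaCoend_mk_id_eq_homToCommaCoend {V : 𝒰} (g : B.obj V ⟶ J.obj A₀) (υ : U₀ ⟶ V) :
    (Quot.mk _ ⟨⟨V, A₀, g⟩, (𝟙 A₀, υ)⟩ : CommaCoend J B U₀ A₀) =
      homToCommaCoend J B U₀ A₀ (B.map υ ≫ g) := by
  simpa [homToCommaCoend] using (commaCoend_mk_comp_right J B U₀ A₀
    (c := ⟨U₀, A₀, B.map υ ≫ g⟩) (c' := ⟨V, A₀, g⟩) ⟨υ, 𝟙 A₀, by simp⟩ (𝟙 A₀) (𝟙 U₀)).symm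

theorem homToCommaCoend_commaCoendToHom (x : CommaCoend J B U₀ A₀) :
    homToCommaCoend J B U₀ A₀ (commaCoendToHom J B U₀ A₀ x) = x := by
  induction x using Quot.ind with
  | mk x =>
    obtain ⟨c, α, υ⟩ := x
    rw [commaCoend_mk_eq_mk_id_right, commaCoend_mk_id_eq_homToCommaCoend,
      commaCoendToHom_homToCommaCoend]

end

/-- Beck–Chevalley for comma squares of ordinary categories: for functors `J : 𝒜 ⥤ ℬ`
and `B : 𝒰 ⥤ ℬ`, the mate `D₀* ∘ D₁^* ⟶ B^* ∘ J*` of the canonical transformation of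
the comma square is invertible; concretely, the canonical map
`∫^{(V, β : BV → JX, X)} 𝒜(X,A₀) × 𝒰(U₀,V) ⟶ ℬ(B U₀, J A₀)` is a bijection. -/
theorem comma_square_BC (J : 𝒜 ⥤ ℬ) (B : 𝒰 ⥤ ℬ) (U₀ : 𝒰) (A₀ : 𝒜) :
    Function.Bijective (commaCoendToHom J B U₀ A₀) :=
  Function.bijective_iff_has_inverse.mpr ⟨homToCommaCoend J B U₀ A₀,
    homToCommaCoend_commaCoendToHom J B U₀ A₀, commaCoendToHom_homToCommaCoend J B U₀ A₀⟩
end
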